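/- arXiv:1207.4330 — 4 statements merged into one kernel-verified Lean document; each statement's English description precedes it below -/
import Mathlib

section
/- Let f be holomorphic near a fixed point p with f(p) = p and |f'(p)| > 1. Then there exists r > 0 and a univalent holomorphic map Ψ on the disc of radius r centered at 0 with Ψ(0) = p, Ψ'(0) = 1, and Ψ(λz) = f(Ψ(z)) whenever |z| < r/|λ|, where λ = f'(p). (Koenigs linearization at a repelling fixed point.) -/
/-!
Near `p` the map `f` has a local inverse `g` fixing `p` with multiplier `μ = λ⁻¹`, `0 < |μ| < 1`.
Choose `|μ| < c` with `c ^ 2 < |μ|`: orbits of `g` near `p` approach `p` like `cⁿ`, so the quadratic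
Taylor remainder of `g` makes consecutive terms of Koenigs' sequence `(gⁿ - p) / μⁿ` differ by
`O((c ^ 2 / |μ|)ⁿ)`. Its uniform limit `Φ` is holomorphic with `Φ p = 0`, `Φ' p = 1` and
`Φ ∘ g = μ Φ`, hence `Φ ∘ f = λ Φ`; the local inverse `Ψ` of `Φ` is the required map.
-/

open Metric Filter Set Topology

theorem mapsTo_ball_of_dist_le_mul {α : Type*} [PseudoMetricSpace α] {g : α → α} {p : α}
    {δ c : ℝ} (hc : c ≤ 1) (hg : ∀ w ∈ ball p δ, dist (g w) p ≤ c * dist w p) :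
    MapsTo g (ball p δ) (ball p δ) := fun w hw =>
  mem_ball.2 <| (hg w hw).trans_lt <| (mul_le_of_le_one_left dist_nonneg hc).trans_lt hw

theorem dist_iterate_le_pow_mul {α : Type*} [PseudoMetricSpace α] {g : α → α} {p : α}
    {s : Set α} {c : ℝ} (hc : 0 ≤ c) (hs : MapsTo g s s)
    (hg : ∀ w ∈ s, dist (g w) p ≤ c * dist w p) (n : ℕ) {w : α} (hw : w ∈ s) :
    dist (g^[n] w) p ≤ c ^ n * dist w p := by
  induction n with
  | zero => simp
  | succ n ih =>
    rw [Function.iterate_succ_apply', pow_succ', mul_assoc]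
    exact (hg _ (hs.iterate n hw)).trans (mul_le_mul_of_nonneg_left ih hc)

theorem exists_tendstoUniformlyOn_of_norm_sub_le_geometric {α E : Type*} [NormedAddCommGroup E]
    [CompleteSpace E] {F : ℕ → α → E} {s : Set α} {M q : ℝ} (hq₀ : 0 ≤ q) (hq₁ : q < 1)
    (hF : ∀ n, ∀ x ∈ s, ‖F (n + 1) x - F n x‖ ≤ M * q ^ n) :
    ∃ Φ : α → E, TendstoUniformlyOn F Φ atTop s := by
  have hsum := tendstoUniformlyOn_tsum_nat ((summable_geometric_of_lt_one hq₀ hq₁).mul_left M) hF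
  refine ⟨fun x => F 0 x + ∑' n, (F (n + 1) x - F n x), ?_⟩
  have htel : ∀ N x, F N x = F 0 x + ∑ n ∈ Finset.range N, (F (n + 1) x - F n x) := by
    intro N x
    rw [Finset.sum_range_sub (fun n => F n x)]
    abel
  rw [tendstoUniformlyOn_iff] at hsum ⊢
  refine fun ε hε => (hsum ε hε).mono fun N hN x hx => ?_
  rw [htel N x, dist_add_left]
  exact hN x hx

section Calculus

variable {𝕜 E : Type*} [NontriviallyNormedField 𝕜] [NormedAddCommGroup E] [NormedSpace 𝕜 E]

theorem AnalyticAt.isBigO_sub_sub_smul_deriv {f : 𝕜 → E} {x : 𝕜} (hf : AnalyticAt 𝕜 f x) :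
    (fun y => f y - f x - (y - x) • deriv f x) =O[𝓝 x] fun y => ‖y - x‖ ^ 2 := by
  obtain ⟨ps, hps⟩ := hf
  have hlin : ∀ y, ps.partialSum 2 y = f x + y • deriv f x := by
    intro y
    simp [FormalMultilinearSeries.partialSum, Finset.sum_range_succ,
      hps.deriv, ← hps.coeff_zero 1]
  have hshift := (hps.isBigO_sub_partialSum_pow 2).comp_tendsto
    (tendsto_sub_nhds_zero_iff.2 (tendsto_id (x := 𝓝 x)))
  simpa [Function.comp_def, hlin, sub_sub] using hshift

theorem HasDerivAt.eventually_norm_sub_le {f : 𝕜 → E} {f' : E} {x : 𝕜} (hf : HasDerivAt f f' x)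
    {c : ℝ} (hc : ‖f'‖ < c) : ∀ᶠ y in 𝓝 x, ‖f y - f x‖ ≤ c * ‖y - x‖ := by
  filter_upwards [(hasDerivAt_iff_isLittleO.1 hf).def (sub_pos.2 hc)] with y hy
  calc ‖f y - f x‖ ≤ ‖f y - f x - (y - x) • f'‖ + ‖(y - x) • f'‖ := norm_le_norm_sub_add _ _
    _ ≤ (c - ‖f'‖) * ‖y - x‖ + ‖y - x‖ * ‖f'‖ := by rw [norm_smul]; gcongr
    _ = c * ‖y - x‖ := by ring

theorem AnalyticAt.exists_localInverse [CompleteSpace 𝕜] [CharZero 𝕜] {f : 𝕜 → 𝕜} {a : 𝕜}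
    (hf : AnalyticAt 𝕜 f a) (hf' : deriv f a ≠ 0) :
    ∃ g : 𝕜 → 𝕜, AnalyticAt 𝕜 g (f a) ∧ g (f a) = a ∧ deriv g (f a) = (deriv f a)⁻¹ ∧
      (∀ᶠ x in 𝓝 a, g (f x) = x) ∧ ∀ᶠ y in 𝓝 (f a), f (g y) = y :=
  ⟨_, hf.analyticAt_localInverse hf', HasStrictFDerivAt.localInverse_apply_image _,
    (HasStrictDerivAt.to_localInverse _ _).hasDerivAt.deriv,
    HasStrictDerivAt.eventually_left_inverse _ _, HasStrictDerivAt.eventually_right_inverse _ _⟩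

end Calculus

section KoenigsSeq

variable {𝕜 : Type*} [NontriviallyNormedField 𝕜] {g : 𝕜 → 𝕜} {p μ : 𝕜}

def koenigsSeq (g : 𝕜 → 𝕜) (p μ : 𝕜) (n : ℕ) (w : 𝕜) : 𝕜 :=
  (g^[n] w - p) / μ ^ n

theorem koenigsSeq_apply_of_isFixedPt (hgp : g p = p) (n : ℕ) : koenigsSeq g p μ n p = 0 := by
  simp [koenigsSeq, Function.iterate_fixed hgp]

theorem koenigsSeq_apply_map (hμ : μ ≠ 0) (n : ℕ) (w : 𝕜) :
    koenigsSeq g p μ n (g w) = μ * koenigsSeq g p μ (n + 1) w := by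
  rw [koenigsSeq, koenigsSeq, ← Function.iterate_succ_apply, pow_succ]
  field_simp

theorem koenigsSeq_succ_sub (hμ : μ ≠ 0) (n : ℕ) (w : 𝕜) :
    koenigsSeq g p μ (n + 1) w - koenigsSeq g p μ n w =
      (g (g^[n] w) - p - μ * (g^[n] w - p)) / μ ^ (n + 1) := by
  rw [koenigsSeq, koenigsSeq, Function.iterate_succ_apply', pow_succ]
  field_simp

theorem hasDerivAt_koenigsSeq (hg : HasDerivAt g μ p) (hgp : g p = p) (hμ : μ ≠ 0) (n : ℕ) :
    HasDerivAt (koenigsSeq g p μ n) 1 p := by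
  have := ((hg.iterate p hgp n).sub_const p).div_const (μ ^ n)
  rwa [div_self (pow_ne_zero n hμ)] at this

theorem differentiableOn_koenigsSeq {s : Set 𝕜} (hg : DifferentiableOn 𝕜 g s) (hs : MapsTo g s s)
    (n : ℕ) : DifferentiableOn 𝕜 (koenigsSeq g p μ n) s :=
  ((hg.iterate hs n).sub_const p).div_const _

theorem norm_koenigsSeq_succ_sub_le {s : Set 𝕜} {c C δ : ℝ} (hμ : μ ≠ 0) (hc : 0 ≤ c) (hC : 0 ≤ C)
    (hs : MapsTo g s s) (hsδ : ∀ w ∈ s, ‖w - p‖ ≤ δ)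
    (hcontr : ∀ w ∈ s, ‖g w - p‖ ≤ c * ‖w - p‖)
    (htaylor : ∀ w ∈ s, ‖g w - p - μ * (w - p)‖ ≤ C * ‖w - p‖ ^ 2) (n : ℕ) {w : 𝕜} (hw : w ∈ s) :
    ‖koenigsSeq g p μ (n + 1) w - koenigsSeq g p μ n w‖ ≤
      C * δ ^ 2 / ‖μ‖ * (c ^ 2 / ‖μ‖) ^ n := by
  have horbit : ‖g^[n] w - p‖ ≤ c ^ n * δ := by
    have := dist_iterate_le_pow_mul hc hs (by simpa only [dist_eq_norm] using hcontr) n hw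
    rw [dist_eq_norm, dist_eq_norm] at this
    exact this.trans (mul_le_mul_of_nonneg_left (hsδ w hw) (pow_nonneg hc n))
  rw [koenigsSeq_succ_sub hμ, norm_div, norm_pow, div_le_iff₀ (by positivity)]
  calc ‖g (g^[n] w) - p - μ * (g^[n] w - p)‖ ≤ C * ‖g^[n] w - p‖ ^ 2 := htaylor _ (hs.iterate n hw)
    _ ≤ C * (c ^ n * δ) ^ 2 := by gcongr
    _ = C * δ ^ 2 / ‖μ‖ * (c ^ 2 / ‖μ‖) ^ n * ‖μ‖ ^ (n + 1) := by
      rw [div_pow, pow_succ]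
      field_simp [norm_ne_zero_iff.2 hμ]
      ring

end KoenigsSeq

structure IsLinearizingMap (g : ℂ → ℂ) (p μ : ℂ) (Φ : ℂ → ℂ) : Prop where
  analyticAt : AnalyticAt ℂ Φ p
  apply_fixedPt : Φ p = 0
  deriv_eq_one : deriv Φ p = 1
  eventually_conj : ∀ᶠ w in 𝓝 p, Φ (g w) = μ * Φ w

theorem isLinearizingMap_of_tendstoUniformlyOn_koenigsSeq {g Φ : ℂ → ℂ} {p μ : ℂ} {s : Set ℂ}
    (hs : IsOpen s) (hp : p ∈ s) (hgs : MapsTo g s s) (hg : DifferentiableOn ℂ g s)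
    (hgp : g p = p) (hμ : HasDerivAt g μ p) (hμ0 : μ ≠ 0)
    (hΦ : TendstoUniformlyOn (koenigsSeq g p μ) Φ atTop s) : IsLinearizingMap g p μ Φ := by
  have hdiff : ∀ᶠ n in atTop, DifferentiableOn ℂ (koenigsSeq g p μ n) s :=
    Eventually.of_forall (differentiableOn_koenigsSeq hg hgs)
  have hloc := hΦ.tendstoLocallyUniformlyOn
  refine ⟨(hloc.differentiableOn hdiff hs).analyticAt (hs.mem_nhds hp), ?_, ?_, ?_⟩
  · refine tendsto_nhds_unique (hΦ.tendsto_at hp) ?_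
    simp only [koenigsSeq_apply_of_isFixedPt hgp, tendsto_const_nhds]
  · have hderiv := (hloc.deriv hdiff hs).tendsto_at hp
    have hone : ∀ n, deriv (koenigsSeq g p μ n) p = 1 :=
      fun n => (hasDerivAt_koenigsSeq hμ hgp hμ0 n).deriv
    simp only [Function.comp_def, hone] at hderiv
    exact tendsto_nhds_unique hderiv tendsto_const_nhds
  · filter_upwards [hs.mem_nhds hp] with w hw
    refine tendsto_nhds_unique (hΦ.tendsto_at (hgs hw)) ?_
    simp only [koenigsSeq_apply_map hμ0]
    exact ((hΦ.tendsto_at hw).comp (tendsto_add_atTop_nat 1)).const_mul μ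

theorem exists_isLinearizingMap_of_attracting {g : ℂ → ℂ} {p : ℂ} (hg : AnalyticAt ℂ g p)
    (hgp : g p = p) (hμ0 : deriv g p ≠ 0) (hμ1 : ‖deriv g p‖ < 1) :
    ∃ Φ, IsLinearizingMap g p (deriv g p) Φ := by
  set μ := deriv g p
  have hμpos : 0 < ‖μ‖ := norm_pos_iff.2 hμ0
  obtain ⟨c, hμc, hc⟩ : ∃ c, ‖μ‖ < c ∧ c < √‖μ‖ :=
    exists_between ((Real.lt_sqrt hμpos.le).2 (by nlinarith))
  have hc0 : 0 ≤ c := hμpos.le.trans hμc.le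
  have hc2 : c ^ 2 < ‖μ‖ := (Real.lt_sqrt hc0).1 hc
  obtain ⟨C, hC0, hC⟩ := hg.isBigO_sub_sub_smul_deriv.exists_nonneg
  obtain ⟨δ, hδ, hball⟩ := eventually_nhds_iff_ball.1 <| hg.eventually_analyticAt.and <|
    (hg.differentiableAt.hasDerivAt.eventually_norm_sub_le hμc).and hC.bound
  simp only [hgp, smul_eq_mul, norm_pow, norm_norm] at hball
  have hcontr : ∀ w ∈ ball p δ, ‖g w - p‖ ≤ c * ‖w - p‖ := fun w hw => (hball w hw).2.1
  have htaylor : ∀ w ∈ ball p δ, ‖g w - p - μ * (w - p)‖ ≤ C * ‖w - p‖ ^ 2 := fun w hw => by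
    simpa only [mul_comm] using (hball w hw).2.2
  have hmaps : MapsTo g (ball p δ) (ball p δ) :=
    mapsTo_ball_of_dist_le_mul (show c ≤ 1 by nlinarith) (by simpa only [dist_eq_norm] using hcontr)
  obtain ⟨Φ, hΦ⟩ := exists_tendstoUniformlyOn_of_norm_sub_le_geometric (by positivity)
    ((div_lt_one hμpos).2 hc2) fun n w hw =>
      norm_koenigsSeq_succ_sub_le hμ0 hc0 hC0 hmaps (fun w hw => (mem_ball_iff_norm.1 hw).le)
        hcontr htaylor n hw
  exact ⟨Φ, isLinearizingMap_of_tendstoUniformlyOn_koenigsSeq isOpen_ball (mem_ball_self hδ) hmaps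
    (fun w hw => (hball w hw).1.differentiableAt.differentiableWithinAt) hgp
    hg.differentiableAt.hasDerivAt hμ0 hΦ⟩

theorem exists_isLinearizingMap_of_repelling {f : ℂ → ℂ} {p : ℂ} (hf : AnalyticAt ℂ f p)
    (hfp : f p = p) (hlam : 1 < ‖deriv f p‖) : ∃ Φ, IsLinearizingMap f p (deriv f p) Φ := by
  have hlam0 : deriv f p ≠ 0 := norm_pos_iff.1 (one_pos.trans hlam)
  obtain ⟨g, hg, hgp, hg', hgf, -⟩ := hf.exists_localInverse hlam0
  rw [hfp] at hg hgp hg'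
  obtain ⟨Φ, hΦ⟩ := exists_isLinearizingMap_of_attracting hg hgp
    (by rw [hg']; exact inv_ne_zero hlam0) (by rw [hg', norm_inv]; exact inv_lt_one_of_one_lt₀ hlam)
  refine ⟨Φ, hΦ.analyticAt, hΦ.apply_fixedPt, hΦ.deriv_eq_one, ?_⟩
  have hf_tendsto : Tendsto f (𝓝 p) (𝓝 p) := by
    simpa only [hfp] using hf.continuousAt.tendsto
  filter_upwards [hgf, hf_tendsto.eventually hΦ.eventually_conj] with w hgfw hw
  rw [hgfw, hg'] at hw
  rw [hw, mul_inv_cancel_left₀ hlam0]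

/-- Koenigs linearization at a repelling fixed point. -/
theorem koenigs_linearization
    (f : ℂ → ℂ) (p : ℂ) (U : Set ℂ) (hU : U ∈ nhds p)
    (hf : DifferentiableOn ℂ f U) (hfp : f p = p)
    (hlam : 1 < ‖deriv f p‖) :
    ∃ r > (0 : ℝ), ∃ Ψ : ℂ → ℂ,
      DifferentiableOn ℂ Ψ (ball (0 : ℂ) r) ∧
      Set.InjOn Ψ (ball (0 : ℂ) r) ∧
      Ψ 0 = p ∧ deriv Ψ 0 = 1 ∧
      ∀ z : ℂ, ‖z‖ < r / ‖deriv f p‖ →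
        Ψ (deriv f p * z) = f (Ψ z) := by
  have hfa := hf.analyticAt hU
  obtain ⟨Φ, hΦ, hΦp, hΦ', hconj⟩ := exists_isLinearizingMap_of_repelling hfa hfp hlam
  obtain ⟨Ψ, hΨ, hΨ0, hΨ', hΨΦ, hΦΨ⟩ := hΦ.exists_localInverse (by rw [hΦ']; exact one_ne_zero)
  rw [hΦp] at hΨ hΨ0 hΨ' hΦΨ
  have hΨ_tendsto : Tendsto Ψ (𝓝 0) (𝓝 p) := hΨ0 ▸ hΨ.continuousAt.tendsto
  have hf_tendsto : Tendsto f (𝓝 p) (𝓝 p) := by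
    simpa only [hfp] using hfa.continuousAt.tendsto
  have hconjΨ : ∀ᶠ z in 𝓝 0, Ψ (deriv f p * z) = f (Ψ z) := by
    filter_upwards [hΦΨ, hΨ_tendsto.eventually (hconj.and (hf_tendsto.eventually hΨΦ))]
      with z hz ⟨hfz, hΨf⟩
    rw [← hΨf, hfz, hz]
  obtain ⟨r, hr, hball⟩ :=
    eventually_nhds_iff_ball.1 (hΨ.eventually_analyticAt.and (hΦΨ.and hconjΨ))
  refine ⟨r, hr, Ψ, fun z hz => (hball z hz).1.differentiableAt.differentiableWithinAt,
    Set.LeftInvOn.injOn fun z hz => (hball z hz).2.1, hΨ0, by rw [hΨ', hΦ', inv_one],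
    fun z hz => (hball z ?_).2.2⟩
  rw [mem_ball_zero_iff]
  exact hz.trans_le (div_le_self hr.le hlam.le)
end

section
/- Let Ψ: ℂ → ℂ be entire and satisfy Ψ(λz) = f(Ψ(z)) for all z ∈ ℂ, where f is entire, λ = f'(p), Ψ(0) = p, and Ψ is injective on a neighbourhood of 0. If the fixed point p is not in the forward orbit of any critical value of f (i.e., for every n ≥ 1 and every w with f^n(w) = p, the derivative (f^n)'(w) ≠ 0), then Ψ'(z) ≠ 0 for every z with Ψ(z) = p. -/
/-!
Differentiating `Ψ (λ ^ n * w) = f^[n] (Ψ w)` gives `λ ^ n Ψ'(λ ^ n w) = (f^[n])'(Ψ w) Ψ'(w)`.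
Injectivity makes the order `k` of `Ψ'` at `0` finite, and comparing leading coefficients in the
case `n = 1` forces `λ ^ k = 1`, hence `k = 0` as `|λ| > 1`. Given `Ψ z = p`, take `n ≥ 1` so
large that `Ψ'` does not vanish at `w = λ⁻ⁿ z`; then `f^[n] (Ψ w) = p`, so the right-hand side is
a product of nonzero factors.
-/

open Filter Set Topology Function

section AnalyticOrder

variable {𝕜 E : Type*} [NontriviallyNormedField 𝕜] [NormedAddCommGroup E] [NormedSpace 𝕜 E]

/-- Comparing leading Taylor coefficients on both sides of `g (a * z) = c z • g z`. -/
theorem AnalyticAt.pow_analyticOrderAt_eq_of_comp_mul_eq_smul {g : 𝕜 → E} {c : 𝕜 → 𝕜} {a : 𝕜}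
    {k : ℕ} (hg : AnalyticAt 𝕜 g 0) (hk : analyticOrderAt g 0 = k) (hc : ContinuousAt c 0)
    (heq : ∀ᶠ z in 𝓝 0, g (a * z) = c z • g z) : a ^ k = c 0 := by
  obtain ⟨h, hh, hh0, hgh⟩ := hg.analyticOrderAt_eq_natCast.mp hk
  simp only [sub_zero] at hgh
  have hmul : Tendsto (a * ·) (𝓝 0) (𝓝 0) := (continuous_const_mul a).tendsto' 0 0 (mul_zero a)
  have hgh' : ∀ᶠ z in 𝓝 0, g (a * z) = (a * z) ^ k • h (a * z) := hmul.eventually hgh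
  have hfactor : (fun z ↦ a ^ k • h (a * z)) =ᶠ[𝓝[≠] 0] fun z ↦ c z • h z := by
    filter_upwards [eventually_nhdsWithin_of_eventually_nhds (hgh.and (hgh'.and heq)),
      self_mem_nhdsWithin] with z ⟨h₁, h₂, h₃⟩ hz
    refine smul_right_injective E (pow_ne_zero k hz) ?_
    show z ^ k • a ^ k • h (a * z) = z ^ k • c z • h z
    rw [smul_smul, ← mul_pow, mul_comm z a, ← h₂, h₃, h₁, smul_comm]
  have hcont : ContinuousAt (fun z ↦ a ^ k • h (a * z)) 0 :=
    continuousAt_const.smul (hh.continuousAt.comp_of_eq (by fun_prop) (mul_zero a))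
  have hlim : a ^ k • h 0 = c 0 • h 0 := by
    simpa using ((hcont.eventuallyEq_nhds_iff_eventuallyEq_nhdsNE
      (hc.smul hh.continuousAt)).mp hfactor).self_of_nhds
  exact smul_left_injective 𝕜 hh0 hlim

theorem AnalyticAt.analyticOrderAt_deriv_ne_top_of_injOn [CharZero 𝕜] [CompleteSpace E]
    {g : 𝕜 → E} {x : 𝕜} (hg : AnalyticAt 𝕜 g x) (hinj : ∃ U ∈ 𝓝 x, InjOn g U) :
    analyticOrderAt (deriv g) x ≠ ⊤ := by
  obtain ⟨U, hU, hgU⟩ := hinj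
  intro htop
  have hconst : ∀ᶠ y in 𝓝 x, g y - g x = 0 := by
    rw [← analyticOrderAt_eq_top, ← hg.analyticOrderAt_deriv_add_one, htop, top_add]
  obtain ⟨y, ⟨hy, hyU⟩, hyx⟩ :=
    ((eventually_nhdsWithin_of_eventually_nhds (hconst.and hU)).and
      (self_mem_nhdsWithin (s := {x}ᶜ))).exists
  exact hyx (hgU hyU (mem_of_mem_nhds hU) (sub_eq_zero.mp hy))

end AnalyticOrder

namespace Function.Semiconj

section

variable {𝕜 : Type*} [NontriviallyNormedField 𝕜] {f Ψ : 𝕜 → 𝕜} {a : 𝕜}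

theorem apply_pow_mul (h : Semiconj Ψ (a * ·) f) (n : ℕ) (w : 𝕜) :
    Ψ (a ^ n * w) = f^[n] (Ψ w) := by
  rw [← mul_left_iterate_apply, (h.iterate_right n).eq]

theorem pow_mul_deriv_pow_mul (h : Semiconj Ψ (a * ·) f) (hf : Differentiable 𝕜 f)
    {w : 𝕜} (hΨ : DifferentiableAt 𝕜 Ψ w) (n : ℕ) :
    a ^ n * deriv Ψ (a ^ n * w) = deriv f^[n] (Ψ w) * deriv Ψ w := by
  have hcomp : (fun z ↦ Ψ (a ^ n * z)) = f^[n] ∘ Ψ := funext (h.apply_pow_mul n)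
  rw [← smul_eq_mul, ← deriv_comp_mul_left, hcomp, deriv_comp w ((hf.iterate n) _) hΨ]

end

/-- The order `k` of `Ψ'` at `0` satisfies `a ^ k = 1` by the chain rule
`a Ψ'(a z) = f'(Ψ z) Ψ'(z)`. -/
theorem deriv_zero_ne_zero {f Ψ : ℂ → ℂ} {a : ℂ} (h : Semiconj Ψ (a * ·) f)
    (hf : Differentiable ℂ f) (hΨ : Differentiable ℂ Ψ) (ha : 1 < ‖a‖) (hfa : deriv f (Ψ 0) = a)
    (hinj : ∃ U ∈ 𝓝 0, InjOn Ψ U) : deriv Ψ 0 ≠ 0 := by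
  have ha0 : a ≠ 0 := norm_pos_iff.mp (zero_lt_one.trans ha)
  have hΨ0 : AnalyticAt ℂ Ψ 0 := hΨ.analyticAt 0
  obtain ⟨k, hk⟩ := WithTop.ne_top_iff_exists.mp (hΨ0.analyticOrderAt_deriv_ne_top_of_injOn hinj)
  have hrel : ∀ z, deriv Ψ (a * z) = (a⁻¹ * deriv f (Ψ z)) • deriv Ψ z := fun z ↦ by
    have hchain := h.pow_mul_deriv_pow_mul hf (hΨ z) 1
    rw [pow_one, iterate_one] at hchain
    rw [smul_eq_mul, mul_assoc, ← hchain, inv_mul_cancel_left₀ ha0]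
  have hc : ContinuousAt (fun z ↦ a⁻¹ * deriv f (Ψ z)) 0 :=
    continuousAt_const.mul ((hf.analyticAt _).deriv.continuousAt.comp hΨ.continuous.continuousAt)
  have hpow : a ^ k = 1 := by
    simpa [hfa, ha0] using
      hΨ0.deriv.pow_analyticOrderAt_eq_of_comp_mul_eq_smul hk.symm hc (.of_forall hrel)
  have hk0 : k = 0 := by
    by_contra hk0
    simpa [← norm_pow, hpow] using one_lt_pow₀ ha hk0
  exact hΨ0.deriv.analyticOrderAt_eq_zero.mp (by rw [← hk, hk0]; rfl)

end Function.Semiconj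

theorem tendsto_inv_pow_mul_nhds_zero {𝕜 : Type*} [NormedDivisionRing 𝕜] {a : 𝕜}
    (ha : 1 < ‖a‖) (z : 𝕜) : Tendsto (fun n : ℕ ↦ (a ^ n)⁻¹ * z) atTop (𝓝 0) := by
  have hlt : ‖a⁻¹‖ < 1 := by rw [norm_inv]; exact inv_lt_one_of_one_lt₀ ha
  simpa [inv_pow] using (tendsto_pow_atTop_nhds_zero_of_norm_lt_one hlt).mul_const z

theorem linearization_regular_fiber_general
    (f Ψ : ℂ → ℂ) (p lam : ℂ)
    (hf : Differentiable ℂ f) (hΨ : Differentiable ℂ Ψ)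
    (hlam : lam = deriv f p) (hrep : 1 < ‖lam‖)
    (hΨ0 : Ψ 0 = p)
    (hinj : ∃ U ∈ nhds (0 : ℂ), Set.InjOn Ψ U)
    (hfun : ∀ z : ℂ, Ψ (lam * z) = f (Ψ z))
    (hreg : ∀ n : ℕ, 1 ≤ n → ∀ w : ℂ, f^[n] w = p → deriv f^[n] w ≠ 0) :
    ∀ z : ℂ, Ψ z = p → deriv Ψ z ≠ 0 := by
  have hsemi : Semiconj Ψ (lam * ·) f := hfun
  have hΨ'0 : deriv Ψ 0 ≠ 0 := hsemi.deriv_zero_ne_zero hf hΨ hrep (by rw [hΨ0, hlam]) hinj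
  intro z hz
  have hlim : Tendsto (fun n : ℕ ↦ deriv Ψ ((lam ^ n)⁻¹ * z)) atTop (𝓝 (deriv Ψ 0)) :=
    (hΨ.analyticAt 0).deriv.continuousAt.tendsto.comp (tendsto_inv_pow_mul_nhds_zero hrep z)
  obtain ⟨n, hn, hw⟩ := ((eventually_ge_atTop 1).and (hlim.eventually_ne hΨ'0)).exists
  set w := (lam ^ n)⁻¹ * z
  have hzw : lam ^ n * w = z :=
    mul_inv_cancel_left₀ (pow_ne_zero n (norm_pos_iff.mp (zero_lt_one.trans hrep))) z
  have hfiber : f^[n] (Ψ w) = p := by rw [← hsemi.apply_pow_mul, hzw, hz]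
  have hchain := hsemi.pow_mul_deriv_pow_mul hf (hΨ w) n
  rw [hzw] at hchain
  intro h0
  rw [h0, mul_zero] at hchain
  exact mul_ne_zero (hreg n hn _ hfiber) hw hchain.symm

/-- If the fixed point `p` has only regular preimages under all iterates of `f`,
then the global linearization `Ψ` has nonvanishing derivative on the fiber of `p`. -/
theorem linearization_regular_fiber
    (f Ψ : ℂ → ℂ) (p lam : ℂ)
    (hf : Differentiable ℂ f) (hΨ : Differentiable ℂ Ψ)
    (hfp : f p = p) (hlam : lam = deriv f p) (hrep : 1 < ‖lam‖)
    (hΨ0 : Ψ 0 = p)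
    (hinj : ∃ U ∈ nhds (0 : ℂ), Set.InjOn Ψ U)
    (hfun : ∀ z : ℂ, Ψ (lam * z) = f (Ψ z))
    (hreg : ∀ n : ℕ, 1 ≤ n → ∀ w : ℂ, f^[n] w = p → deriv f^[n] w ≠ 0) :
    ∀ z : ℂ, Ψ z = p → deriv Ψ z ≠ 0 :=
  linearization_regular_fiber_general f Ψ p lam hf hΨ hlam hrep hΨ0 hinj hfun hreg
end

section
/- Let T be holomorphic near 0 with T(0) = Q ∈ ℝ \ {0}, and power series T(z) = Q + a₁z + ... + a_m z^m + a_{m+1} z^{m+1} + O(z^{m+2}) with a₁,…,a_m ∈ ℝ, a₁ ≠ 0, and Im(a_{m+1}) ≠ 0. Let β(x) = x + i b x^K + o(x^K) (b ∈ ℝ \ {0}, K > 1) be a real-analytic curve through 0 tangent to ℝ. If Im T'(β(x)) ≡ 0 for all small x > 0, then m ≥ K. -/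
/-!
Suppose `m < K`. Then `β(x) - x = O(x^K) = o(x^m)`, and since `T'` is strictly differentiable
at `0`, `T'(β(x)) - T'(x) = O(β(x) - x) = o(x^m)`. On the real axis the expansion of `T`, whose
coefficients `a₁, …, a_m` are real, gives `Im T'(x) = (m + 1) Im(a_{m+1}) x^m + O(x^{m+1})`.
Hence `0 = Im T'(β(x)) = (m + 1) Im(a_{m+1}) x^m + o(x^m)`, contradicting `Im a_{m+1} ≠ 0`.
-/

open Metric Filter Asymptotics Set Topology

section AnalyticOrder

variable {𝕜 E : Type*} [NontriviallyNormedField 𝕜] [NormedAddCommGroup E] [NormedSpace 𝕜 E]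
  {f : 𝕜 → E} {z₀ : 𝕜} {n : ℕ}

lemma isBigO_sub_pow_of_natCast_le_analyticOrderAt (hf : AnalyticAt 𝕜 f z₀)
    (hn : n ≤ analyticOrderAt f z₀) : f =O[𝓝 z₀] fun z => (z - z₀) ^ n := by
  obtain ⟨g, hg, hfg⟩ := (natCast_le_analyticOrderAt hf).mp hn
  have hgO : (fun z => (z - z₀) ^ n • g z) =O[𝓝 z₀] fun z => (z - z₀) ^ n • (1 : 𝕜) :=
    (isBigO_refl _ _).smul (hg.continuousAt.isBigO_one 𝕜)
  simpa using hgO.congr' (EventuallyEq.symm hfg) .rfl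

lemma natCast_le_analyticOrderAt_of_isBigO (hf : AnalyticAt 𝕜 f z₀)
    (h : f =O[𝓝 z₀] fun z => (z - z₀) ^ n) : n ≤ analyticOrderAt f z₀ := by
  cases hk : analyticOrderAt f z₀ with
  | top => exact le_top
  | coe k =>
    obtain ⟨g, hg, hg0, hfg⟩ := hf.analyticOrderAt_eq_natCast.mp hk
    by_contra! hkn
    norm_cast at hkn
    have hg_large : ∀ᶠ z in 𝓝 z₀, ‖g z₀‖ / 2 < ‖g z‖ :=
      hg.continuousAt.norm.eventually (lt_mem_nhds (by simpa using norm_pos_iff.mpr hg0))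
    have hpow_f : (fun z => ‖z - z₀‖ ^ k) =O[𝓝 z₀] f := by
      refine IsBigO.of_bound (2 / ‖g z₀‖) ?_
      filter_upwards [hfg, hg_large] with z hz hgz
      rw [hz, norm_smul, norm_pow, norm_pow, norm_norm, div_mul_eq_mul_div,
        le_div_iff₀ (norm_pos_iff.mpr hg0)]
      nlinarith [pow_nonneg (norm_nonneg (z - z₀)) k]
    have hself : (fun z => ‖z - z₀‖ ^ k) =o[𝓝 z₀] fun z => ‖z - z₀‖ ^ k :=
      (hpow_f.trans (h.norm_right.congr_right fun z => by simp [norm_pow])).trans_isLittleO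
        (isLittleO_pow_sub_pow_sub z₀ hkn)
    refine isLittleO_irrefl' ?_ hself
    have hne : ∀ᶠ z in 𝓝[≠] z₀, ‖‖z - z₀‖ ^ k‖ ≠ 0 :=
      eventually_nhdsWithin_of_forall fun z hz => by simp [sub_ne_zero.mpr hz]
    exact hne.frequently.filter_mono nhdsWithin_le_nhds

lemma AnalyticAt.deriv_isBigO_sub_pow [CharZero 𝕜] [CompleteSpace E] (hf : AnalyticAt 𝕜 f z₀)
    (h : f =O[𝓝 z₀] fun z => (z - z₀) ^ (n + 1)) :
    deriv f =O[𝓝 z₀] fun z => (z - z₀) ^ n := by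
  have hord := natCast_le_analyticOrderAt_of_isBigO hf h
  have hf0 : f z₀ = 0 := h.eq_zero_imp.self_of_nhds (by simp)
  exact isBigO_sub_pow_of_natCast_le_analyticOrderAt hf.deriv
    ((analyticOrderAt_deriv_ge_iff hf hf0).mpr (mod_cast hord))

end AnalyticOrder

lemma HasStrictFDerivAt.isBigO_comp_sub_comp {𝕜 E F α : Type*} [NontriviallyNormedField 𝕜]
    [NormedAddCommGroup E] [NormedSpace 𝕜 E] [NormedAddCommGroup F] [NormedSpace 𝕜 F]
    {f : E → F} {f' : E →L[𝕜] F} {x : E} (hf : HasStrictFDerivAt f f' x) {l : Filter α}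
    {u v : α → E} (hu : Tendsto u l (𝓝 x)) (hv : Tendsto v l (𝓝 x)) :
    (fun t => f (u t) - f (v t)) =O[l] fun t => u t - v t :=
  hf.isBigO_sub.comp_tendsto (by simpa [nhds_prod_eq] using hu.prodMk hv)

lemma isLittleO_rpow_rpow_nhdsGT_zero {s t : ℝ} (h : s < t) :
    (fun x : ℝ => x ^ t) =o[𝓝[>] 0] fun x => x ^ s := by
  have hts : 0 < t - s := sub_pos.mpr h
  have hsmall : (fun x : ℝ => x ^ (t - s)) =o[𝓝[>] 0] fun _ => (1 : ℝ) := by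
    rw [isLittleO_one_iff]
    simpa [Real.zero_rpow hts.ne'] using
      (Real.continuousAt_rpow_const 0 (t - s) (Or.inr hts.le)).tendsto.mono_left
        nhdsWithin_le_nhds
  refine ((isBigO_refl (fun x : ℝ => x ^ s) _).mul_isLittleO hsmall).congr' ?_ (by simp)
  filter_upwards [self_mem_nhdsWithin] with x (hx : 0 < x)
  rw [← Real.rpow_add hx, add_sub_cancel]

lemma isBigO_sub_of_eq_add_mul_add_isLittleO {α : Type*} {l : Filter α} {u v e : α → ℂ}
    {g : α → ℝ} {c : ℂ} (hu : ∀ x, u x = v x + c * g x + e x)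
    (he : e =o[l] fun x => (g x : ℂ)) : (fun x => u x - v x) =O[l] g := by
  have hcast : (fun x => (g x : ℂ)) =O[l] g := isBigO_of_le _ fun x => by simp
  refine ((hcast.const_mul_left c).add (he.isBigO.trans hcast)).congr' ?_ .rfl
  exact .of_forall fun x => by simp only [hu x]; ring

lemma hasDerivAt_sum_mul_pow {𝕜 : Type*} [NontriviallyNormedField 𝕜] (s : Finset ℕ)
    (a : ℕ → 𝕜) (z : 𝕜) :
    HasDerivAt (fun w => ∑ j ∈ s, a j * w ^ j) (∑ j ∈ s, a j * (j * z ^ (j - 1))) z :=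
  HasDerivAt.fun_sum fun j _ => (hasDerivAt_pow j z).const_mul (a j)

lemma im_sum_mul_deriv_pow_ofReal {m : ℕ} {a : ℕ → ℂ}
    (ha : ∀ j, 1 ≤ j → j ≤ m → (a j).im = 0) (x : ℝ) :
    (∑ j ∈ Finset.Icc 1 (m + 1), a j * (j * (x : ℂ) ^ (j - 1))).im =
      (m + 1) * (a (m + 1)).im * x ^ m := by
  have hreal (j : ℕ) : a j * (j * (x : ℂ) ^ (j - 1)) = a j * ((j * x ^ (j - 1) : ℝ) : ℂ) := by
    push_cast; rfl
  simp only [hreal, Complex.im_sum, Complex.im_mul_ofReal]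
  rw [Finset.sum_Icc_succ_top (by omega), Finset.sum_eq_zero fun j hj => ?_]
  · push_cast
    ring
  · rw [ha j (Finset.mem_Icc.mp hj).1 (Finset.mem_Icc.mp hj).2, zero_mul]

lemma im_deriv_ofReal_sub_leading_isBigO {T : ℂ → ℂ} (hT : AnalyticAt ℂ T 0) {Q : ℂ} {m : ℕ}
    {a : ℕ → ℂ} (ha : ∀ j, 1 ≤ j → j ≤ m → (a j).im = 0)
    (hseries : (fun z : ℂ => T z - (Q + ∑ j ∈ Finset.Icc 1 (m + 1), a j * z ^ j))
        =O[𝓝 0] fun z : ℂ => z ^ (m + 2)) :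
    (fun x : ℝ => (deriv T x).im - (m + 1) * (a (m + 1)).im * x ^ m)
      =O[𝓝 0] fun x => x ^ (m + 1) := by
  set P' : ℂ → ℂ := fun z => ∑ j ∈ Finset.Icc 1 (m + 1), a j * (j * z ^ (j - 1))
  have hP (z : ℂ) :
      HasDerivAt (fun w => Q + ∑ j ∈ Finset.Icc 1 (m + 1), a j * w ^ j) (P' z) z :=
    (hasDerivAt_sum_mul_pow _ a z).const_add _
  have hPa : AnalyticAt ℂ (fun z => Q + ∑ j ∈ Finset.Icc 1 (m + 1), a j * z ^ j) 0 := by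
    fun_prop
  have hR := (hT.fun_sub hPa).deriv_isBigO_sub_pow (n := m + 1) (by simpa using hseries)
  simp only [sub_zero] at hR
  have hTP : (fun z => deriv T z - P' z) =O[𝓝 0] fun z => z ^ (m + 1) := by
    refine hR.congr' ?_ .rfl
    filter_upwards [hT.eventually_analyticAt] with z hz
    rw [deriv_fun_sub hz.differentiableAt (hP z).differentiableAt, (hP z).deriv]
  have hx0 : Tendsto (fun x : ℝ => (x : ℂ)) (𝓝 0) (𝓝 0) :=
    Complex.continuous_ofReal.tendsto' 0 0 Complex.ofReal_zero
  refine ((Complex.imCLM.isBigO_comp _ _).trans ((hTP.comp_tendsto hx0).trans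
    (isBigO_of_le (g := fun x : ℝ => x ^ (m + 1)) _ fun x => by simp))).congr' ?_ .rfl
  exact .of_forall fun x => by simp [P', im_sum_mul_deriv_pow_ofReal ha]

theorem tangency_order_bound_general
    (T : ℂ → ℂ) (r : ℝ) (hr : 0 < r)
    (hT : DifferentiableOn ℂ T (ball (0 : ℂ) r))
    (Q : ℝ)
    (m : ℕ) (a : ℕ → ℂ)
    (ha_real : ∀ j, 1 ≤ j → j ≤ m → (a j).im = 0)
    (ham1 : (a (m + 1)).im ≠ 0)
    (hseries : (fun z : ℂ => T z - ((Q : ℂ) + ∑ j ∈ Finset.Icc 1 (m + 1), a j * z ^ j))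
        =O[nhds 0] fun z : ℂ => z ^ (m + 2))
    (b K : ℝ)
    (β e : ℝ → ℂ)
    (hβ : ∀ x : ℝ, β x = (x : ℂ) + Complex.I * (b : ℂ) * ((x ^ K : ℝ) : ℂ) + e x)
    (he : e =o[nhdsWithin 0 (Set.Ioi 0)] fun x : ℝ => ((x ^ K : ℝ) : ℂ))
    (ε : ℝ) (hε : 0 < ε)
    (him : ∀ x ∈ Set.Ioo (0 : ℝ) ε, (deriv T (β x)).im = 0) :
    K ≤ (m : ℝ) := by
  by_contra! hmK
  have hTa : AnalyticAt ℂ T 0 := hT.analyticAt (ball_mem_nhds 0 hr)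
  have hcurve : (fun x => β x - x) =O[𝓝[>] 0] fun x => x ^ K :=
    isBigO_sub_of_eq_add_mul_add_isLittleO hβ he
  have hx0 : Tendsto (fun x : ℝ => (x : ℂ)) (𝓝[>] 0) (𝓝 0) := by
    simpa using (Complex.continuous_ofReal.tendsto 0).mono_left nhdsWithin_le_nhds
  have hβ0 : Tendsto β (𝓝[>] 0) (𝓝 0) := by
    have hdiff : Tendsto (fun x => β x - x) (𝓝[>] 0) (𝓝 0) :=
      (isLittleO_one_iff ℝ).mp (hcurve.trans_isLittleO (by
        simpa using isLittleO_rpow_rpow_nhdsGT_zero (m.cast_nonneg.trans_lt hmK)))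
    simpa using hx0.add hdiff
  have hcomp : (fun x => deriv T (β x) - deriv T x) =o[𝓝[>] 0] fun x => x ^ m :=
    (hTa.deriv.hasStrictDerivAt.hasStrictFDerivAt.isBigO_comp_sub_comp hβ0 hx0).trans_isLittleO
      (hcurve.trans_isLittleO (by simpa using isLittleO_rpow_rpow_nhdsGT_zero hmK))
  have hreal : (fun x : ℝ => (deriv T x).im - (m + 1) * (a (m + 1)).im * x ^ m)
      =o[𝓝[>] 0] fun x => x ^ m :=
    ((im_deriv_ofReal_sub_leading_isBigO hTa ha_real hseries).mono nhdsWithin_le_nhds)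
      |>.trans_isLittleO ((isLittleO_pow_pow (Nat.lt_succ_self m)).mono nhdsWithin_le_nhds)
  have hleading : (fun x => ((m + 1) * (a (m + 1)).im) * x ^ m) =o[𝓝[>] 0] fun x => x ^ m := by
    have him_comp := (Complex.imCLM.isBigO_comp _ _).trans_isLittleO hcomp
    refine (him_comp.add hreal).neg_left.congr' ?_ .rfl
    filter_upwards [Ioo_mem_nhdsGT hε] with x hx
    simp [him x hx]
  have hpow_ne : ∃ᶠ x in 𝓝[>] (0 : ℝ), x ^ m ≠ 0 :=
    (eventually_nhdsWithin_of_forall fun x (hx : x ∈ Ioi 0) => pow_ne_zero m hx.ne').frequently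
  exact isLittleO_irrefl hpow_ne
    ((isLittleO_const_mul_left_iff (mul_ne_zero (by positivity) ham1)).mp hleading)

/-- Leading-order comparison: if `Im T'(β(x)) ≡ 0` along a curve
`β(x) = x + i b x^K + o(x^K)` tangent to `ℝ`, with the stated power series of `T`,
then `m ≥ K`. -/
theorem tangency_order_bound
    (T : ℂ → ℂ) (r : ℝ) (hr : 0 < r)
    (hT : DifferentiableOn ℂ T (ball (0 : ℂ) r))
    (Q : ℝ) (hQ : Q ≠ 0) (hT0 : T 0 = (Q : ℂ))
    (m : ℕ) (hm : 1 ≤ m) (a : ℕ → ℂ)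
    (ha_real : ∀ j, 1 ≤ j → j ≤ m → (a j).im = 0)
    (ha1 : a 1 ≠ 0) (ham1 : (a (m + 1)).im ≠ 0)
    (hseries : (fun z : ℂ => T z - ((Q : ℂ) + ∑ j ∈ Finset.Icc 1 (m + 1), a j * z ^ j))
        =O[nhds 0] fun z : ℂ => z ^ (m + 2))
    (b K : ℝ) (hb : b ≠ 0) (hK : 1 < K)
    (β e : ℝ → ℂ)
    (hβ : ∀ x : ℝ, β x = (x : ℂ) + Complex.I * (b : ℂ) * ((x ^ K : ℝ) : ℂ) + e x)
    (he : e =o[nhdsWithin 0 (Set.Ioi 0)] fun x : ℝ => ((x ^ K : ℝ) : ℂ))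
    (ε : ℝ) (hε : 0 < ε)
    (hmem : ∀ x ∈ Set.Ioo (0 : ℝ) ε, β x ∈ ball (0 : ℂ) r)
    (him : ∀ x ∈ Set.Ioo (0 : ℝ) ε, (deriv T (β x)).im = 0) :
    K ≤ (m : ℝ) :=
  tangency_order_bound_general T r hr hT Q m a ha_real ham1 hseries b K β e hβ he ε hε him
end

section
/- Let T be an entire function such that T'(z) ∈ ℝ for all z lying on infinitely many distinct straight lines through the origin. Then T' is constant (in fact T' takes a single real value), hence T is affine. -/
/-!
If `T'` is real on the line `ℝ • w`, then so are all derivatives of `t ↦ T'(t w)` at `0`, i.e.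
`w ^ k c_k ∈ ℝ` for the Taylor coefficients `c_k` of `T'` at `0`. When `k ≥ 1` and `c_k ≠ 0` this
forces `(w / |w|) ^ (2k) = conj c_k / c_k`, which has finitely many solutions, so only finitely many
such lines exist. Hence `T'` equals its real constant term.
-/

open Complex ComplexConjugate

lemma im_deriv_ofReal_eq_zero {g : ℂ → ℂ} {t : ℝ} (hg : DifferentiableAt ℂ g t)
    (h : ∀ s : ℝ, (g s).im = 0) : (deriv g t).im = 0 := by
  have hderiv : HasDerivAt (fun s : ℝ => (g s).im) (deriv g t).im t :=
    imCLM.hasFDerivAt.comp_hasDerivAt t hg.hasDerivAt.comp_ofReal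
  simp only [h] at hderiv
  exact hderiv.unique (hasDerivAt_const _ _)

lemma im_iteratedDeriv_ofReal_eq_zero {g : ℂ → ℂ} (hg : Differentiable ℂ g)
    (h : ∀ t : ℝ, (g t).im = 0) (k : ℕ) (t : ℝ) : (iteratedDeriv k g t).im = 0 := by
  induction k generalizing g with
  | zero => simpa using h t
  | succ k ih =>
    rw [iteratedDeriv_succ']
    exact ih hg.deriv fun s => im_deriv_ofReal_eq_zero (hg s) h

lemma im_pow_mul_iteratedDeriv_eq_zero {g : ℂ → ℂ} (hg : Differentiable ℂ g) (w : ℂ)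
    (h : ∀ t : ℝ, (g (t * w)).im = 0) (k : ℕ) : (w ^ k * iteratedDeriv k g 0).im = 0 := by
  have hgw : Differentiable ℂ fun z => g (w * z) := hg.comp (differentiable_id.const_mul w)
  have := im_iteratedDeriv_ofReal_eq_zero hgw (fun t => by simpa [mul_comm] using h t) k 0
  simpa [iteratedDeriv_comp_const_mul hg.contDiff] using this

lemma div_norm_pow_mul_eq_conj {z a : ℂ} {k : ℕ} (hz : z ≠ 0) (h : (z ^ k * a).im = 0) :
    (z / ‖z‖) ^ (2 * k) * a = conj a := by
  have hreal : conj (z ^ k * a) = z ^ k * a := conj_eq_iff_im.mpr h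
  have hnorm : (‖z‖ : ℂ) ^ 2 = z * conj z := by rw [mul_conj, normSq_eq_norm_sq]; push_cast; ring
  have hz' : (‖z‖ : ℂ) ≠ 0 := by exact_mod_cast norm_ne_zero_iff.mpr hz
  rw [map_mul, map_pow] at hreal
  have hzc : z ^ k * conj z ^ k ≠ 0 := by
    rw [← mul_pow, ← hnorm, ← pow_mul]; exact pow_ne_zero _ hz'
  rw [div_pow, pow_mul (‖z‖ : ℂ), hnorm, mul_pow, div_mul_eq_mul_div, div_eq_iff hzc]
  linear_combination -z ^ k * hreal

lemma eq_ofReal_mul_of_div_norm_eq {z w : ℂ} (h : z / ‖z‖ = w / ‖w‖) :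
    z = (‖z‖ / ‖w‖ : ℝ) * w := by
  rcases eq_or_ne w 0 with rfl | hw
  · simpa using h
  have hw' : (‖w‖ : ℂ) ≠ 0 := by exact_mod_cast norm_ne_zero_iff.mpr hw
  rcases eq_or_ne z 0 with rfl | hz
  · simp
  have hz' : (‖z‖ : ℂ) ≠ 0 := by exact_mod_cast norm_ne_zero_iff.mpr hz
  rw [div_eq_div_iff hz' hw'] at h
  rw [ofReal_div, div_mul_eq_mul_div, eq_div_iff hw']
  linear_combination h

lemma exists_im_pow_mul_ne_zero {d : ℕ → ℂ} (hd : ∀ n, d n ≠ 0)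
    (hdist : ∀ m n, m ≠ n → ∀ c : ℝ, d m ≠ (c : ℂ) * d n) {k : ℕ} (hk : k ≠ 0) {a : ℂ}
    (ha : a ≠ 0) : ∃ n, (d n ^ k * a).im ≠ 0 := by
  by_contra! hreal
  have hmaps : Set.MapsTo (fun n => d n / ‖d n‖) Set.univ
      (Polynomial.nthRootsFinset (2 * k) (conj a / a) : Set ℂ) := fun n _ => by
    rw [Finset.mem_coe, Polynomial.mem_nthRootsFinset (by omega), eq_div_iff ha]
    exact div_norm_pow_mul_eq_conj (hd n) (hreal n)
  obtain ⟨m, -, n, -, hmn, heq⟩ :=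
    Set.infinite_univ.exists_ne_map_eq_of_mapsTo hmaps (Finset.finite_toSet _)
  exact hdist m n hmn _ (eq_ofReal_mul_of_div_norm_eq heq)

lemma eq_of_iteratedDeriv_eq_zero {f : ℂ → ℂ} (hf : Differentiable ℂ f) {c : ℂ}
    (h : ∀ k ≠ 0, iteratedDeriv k f c = 0) (z : ℂ) : f z = f c := by
  rw [← Complex.taylorSeries_eq_of_entire' c z hf, tsum_eq_single 0 fun k hk => by simp [h k hk]]
  simp

lemma eq_mul_add_of_deriv_eq {f : ℂ → ℂ} (hf : Differentiable ℂ f) {a : ℂ}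
    (h : ∀ z, deriv f z = a) (z : ℂ) : f z = a * z + f 0 := by
  have hg : Differentiable ℂ fun z => f z - a * z := hf.sub (differentiable_id.const_mul a)
  have hg' : ∀ x, deriv (fun z => f z - a * z) x = 0 := fun x => by
    rw [deriv_fun_sub (hf x) (differentiableAt_fun_id.const_mul a), deriv_const_mul_field', h]
    simp
  have := is_const_of_deriv_eq_zero hg hg' z 0
  linear_combination this

/-- If `T'` is real on infinitely many distinct lines through the origin, then
`T'` is a real constant and `T` is affine. -/
theorem real_derivative_on_many_lines
    (T : ℂ → ℂ) (hT : Differentiable ℂ T)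
    (d : ℕ → ℂ) (hd : ∀ n, d n ≠ 0)
    (hdist : ∀ m n, m ≠ n → ∀ c : ℝ, d m ≠ (c : ℂ) * d n)
    (hreal : ∀ n, ∀ t : ℝ, (deriv T ((t : ℂ) * d n)).im = 0) :
    (∃ a : ℝ, ∀ z : ℂ, deriv T z = (a : ℂ)) ∧
    ∃ a : ℝ, ∃ b : ℂ, ∀ z : ℂ, T z = (a : ℂ) * z + b := by
  have hT' : Differentiable ℂ (deriv T) := hT.deriv
  have hcoeff : ∀ k ≠ 0, iteratedDeriv k (deriv T) 0 = 0 := fun k hk => by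
    by_contra ha
    obtain ⟨n, hn⟩ := exists_im_pow_mul_ne_zero hd hdist hk ha
    exact hn (im_pow_mul_iteratedDeriv_eq_zero hT' (d n) (hreal n) k)
  have hconst : ∀ z, deriv T z = ((deriv T 0).re : ℂ) := fun z => by
    rw [eq_of_iteratedDeriv_eq_zero hT' hcoeff z, eq_comm, ← conj_eq_iff_re, conj_eq_iff_im]
    simpa using hreal 0 0
  exact ⟨⟨_, hconst⟩, _, _, eq_mul_add_of_deriv_eq hT hconst⟩
end
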